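/- arXiv:2304.03956 — 2 statements merged into one kernel-verified Lean document; each statement's English description precedes it below -/
import Mathlib

section
/- Let R be a commutative noetherian ring, let F be an R-linear functor from the category of R-modules to itself, and let p be a prime ideal of R. If the localization F(E_R(R/p))_p is the zero module, then F(E_R(R/p)) itself is the zero module. -/
open CategoryTheory

universe u

noncomputable def extGroup (R : Type u) [CommRing R] (n : ℕ) (M N : Type u)
    [AddCommGroup M] [Module R M] [AddCommGroup N] [Module R N] : Type u :=
  (((Ext R (ModuleCat.{u} R) n).obj (Opposite.op (ModuleCat.of R M))).obj (ModuleCat.of R N)).carrier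

noncomputable instance (R : Type u) [CommRing R] (n : ℕ) (M N : Type u)
    [AddCommGroup M] [Module R M] [AddCommGroup N] [Module R N] :
    AddCommGroup (extGroup R n M N) :=
  inferInstanceAs (AddCommGroup (((Ext R (ModuleCat.{u} R) n).obj
    (Opposite.op (ModuleCat.of R M))).obj (ModuleCat.of R N)).carrier)

noncomputable instance (R : Type u) [CommRing R] (n : ℕ) (M N : Type u)
    [AddCommGroup M] [Module R M] [AddCommGroup N] [Module R N] :
    Module R (extGroup R n M N) :=
  inferInstanceAs (Module R (((Ext R (ModuleCat.{u} R) n).obj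
    (Opposite.op (ModuleCat.of R M))).obj (ModuleCat.of R N)).carrier)

noncomputable def torGroup (R : Type u) [CommRing R] (n : ℕ) (M N : Type u)
    [AddCommGroup M] [Module R M] [AddCommGroup N] [Module R N] : Type u :=
  (((Tor (ModuleCat.{u} R) n).obj (ModuleCat.of R M)).obj (ModuleCat.of R N)).carrier

noncomputable instance (R : Type u) [CommRing R] (n : ℕ) (M N : Type u)
    [AddCommGroup M] [Module R M] [AddCommGroup N] [Module R N] :
    AddCommGroup (torGroup R n M N) :=
  inferInstanceAs (AddCommGroup (((Tor (ModuleCat.{u} R) n).obj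
    (ModuleCat.of R M)).obj (ModuleCat.of R N)).carrier)

noncomputable instance (R : Type u) [CommRing R] (n : ℕ) (M N : Type u)
    [AddCommGroup M] [Module R M] [AddCommGroup N] [Module R N] :
    Module R (torGroup R n M N) :=
  inferInstanceAs (Module R (((Tor (ModuleCat.{u} R) n).obj
    (ModuleCat.of R M)).obj (ModuleCat.of R N)).carrier)

/-- The depth of a module over a noetherian local ring, via Rees's characterization:
the infimum of the set of integers `i` with `Ext^i(k, M) ≠ 0`. -/
noncomputable def moduleDepth (R : Type u) [CommRing R] [IsLocalRing R]
    (M : Type u) [AddCommGroup M] [Module R M] : ℕ∞ :=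
  sInf {n : ℕ∞ | ∃ i : ℕ, n = i ∧ Nontrivial (extGroup R i (IsLocalRing.ResidueField R) M)}

noncomputable def ringDepth (R : Type u) [CommRing R] [IsLocalRing R] : ℕ∞ :=
  moduleDepth R R

/-- Serre's condition `(S₂)` for a commutative ring. -/
def SerreS2Ring (R : Type u) [CommRing R] : Prop :=
  ∀ p : PrimeSpectrum R,
    min 2 (Order.height p) ≤ ringDepth (Localization.AtPrime p.asIdeal)

/-- Serre's condition `(S₂)` for a module. -/
def SerreS2Module (R : Type u) [CommRing R] (M : Type u) [AddCommGroup M] [Module R M] : Prop :=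
  ∀ p : PrimeSpectrum R,
    min 2 (Order.height p) ≤
      moduleDepth (Localization.AtPrime p.asIdeal) (LocalizedModule p.asIdeal.primeCompl M)

/-- A finite free presentation of a module. -/
structure FreePresentation (R : Type u) [CommRing R] (M : Type u)
    [AddCommGroup M] [Module R M] where
  rank₀ : ℕ
  rank₁ : ℕ
  pres : (Fin rank₁ → R) →ₗ[R] (Fin rank₀ → R)
  aug : (Fin rank₀ → R) →ₗ[R] M
  aug_surjective : Function.Surjective aug
  exact : LinearMap.range pres = LinearMap.ker aug

/-- The (Auslander) transpose of a module with respect to a free presentation: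
the cokernel of the `R`-dual of the presentation map. -/
abbrev FreePresentation.Transpose {R : Type u} [CommRing R] {M : Type u}
    [AddCommGroup M] [Module R M] (P : FreePresentation R M) : Type u :=
  ((Fin P.rank₁ → R) →ₗ[R] R) ⧸ LinearMap.range (P.pres.dualMap)

/-- `IsSyzygy R N t M` means that `N` is a `t`-th syzygy of `M` obtained from
surjections from finite free modules. -/
def IsSyzygy (R : Type u) [CommRing R] (N : Type u) [AddCommGroup N] [Module R N] :
    (t : ℕ) → (M : Type u) → [AddCommGroup M] → [Module R M] → Prop
  | 0, M, _, _ => Nonempty (N ≃ₗ[R] M)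
  | (t+1), M, _, _ => ∃ (k : ℕ) (f : (Fin k → R) →ₗ[R] M), Function.Surjective f ∧
      IsSyzygy R N t (LinearMap.ker f)

/-- A module has finite projective dimension iff `Ext^i(M, -)` vanishes for all
sufficiently large `i`. -/
def HasFiniteProjDim (R : Type u) [CommRing R] (M : Type u)
    [AddCommGroup M] [Module R M] : Prop :=
  ∃ n : ℕ, ∀ (N : Type u) [AddCommGroup N] [Module R N], ∀ i : ℕ, n < i →
    Subsingleton (extGroup R i M N)

/-- A noetherian local ring is regular if its maximal ideal is generated by
`dim R` elements. -/
def IsRegularLocal (A : Type u) [CommRing A] [IsLocalRing A] : Prop :=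
  IsNoetherianRing A ∧ ∃ s : Finset A,
    Ideal.span (s : Set A) = IsLocalRing.maximalIdeal A ∧
      (s.card : WithBot ℕ∞) = ringKrullDim A

/-- A witness that the local ring `A` is a complete intersection: its maximal-adic
completion is the quotient of a regular local ring by a regular sequence. -/
structure CompleteIntersectionWitness (A : Type u) [CommRing A] [IsLocalRing A] :
    Type (u + 1) where
  B : Type u
  [commRingB : CommRing B]
  [isLocalRingB : IsLocalRing B]
  regular : IsRegularLocal B
  seq : List B
  seq_regular : RingTheory.Sequence.IsRegular B seq
  equiv : AdicCompletion (IsLocalRing.maximalIdeal A) A ≃+* B ⧸ Ideal.span {x | x ∈ seq}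

/-- A noetherian local ring is a complete intersection if its completion is the
quotient of a regular local ring by an ideal generated by a regular sequence. -/
def IsCompleteIntersectionLocalRing (A : Type u) [CommRing A] [IsLocalRing A] : Prop :=
  Nonempty (CompleteIntersectionWitness A)

/-- Membership in the class `G_{m,n}`. -/
def MemG (R : Type u) [CommRing R] (M : Type u) [AddCommGroup M] [Module R M]
    (m n : ℕ∞) : Prop :=
  (∀ i : ℕ, 1 ≤ i → (i : ℕ∞) ≤ m → Subsingleton (extGroup R i M R)) ∧
  (∀ P : FreePresentation R M, ∀ j : ℕ, 1 ≤ j → (j : ℕ∞) ≤ n →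
    Subsingleton (extGroup R j P.Transpose R))

/-!
For `s ∉ p`, multiplication by `s` is injective on the domain `R ⧸ p`, hence on its essential
extension `E`, and it is then bijective because `E` is injective. An `R`-linear functor sends the
automorphism `s • 𝟙 E` to `s • 𝟙 (F E)`, so every `s ∉ p` acts injectively on `F E`; as each
element of `F E` vanishing in the localization is killed by some `s ∉ p`, `F E = 0`.
-/

namespace Submodule

variable {R E : Type*} [CommRing R] [AddCommGroup E] [Module R E]

def IsEssential (M : Submodule R E) : Prop :=
  ∀ N : Submodule R E, N ⊓ M = ⊥ → N = ⊥

theorem IsEssential.isSMulRegular {M : Submodule R E} (hM : M.IsEssential) {r : R}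
    (hr : IsSMulRegular M r) : IsSMulRegular E r := by
  have hker : LinearMap.ker (LinearMap.lsmul R E r) = ⊥ :=
    hM _ <| (Submodule.eq_bot_iff _).2 fun x ⟨hx, hxM⟩ =>
      congrArg Subtype.val <| hr.right_eq_zero_of_smul
        (show r • (⟨x, hxM⟩ : M) = 0 from Subtype.ext (LinearMap.mem_ker.1 hx))
  exact LinearMap.ker_eq_bot.1 hker

end Submodule

theorem Module.Injective.bijective_smul_of_isSMulRegular {R E : Type*} [CommRing R]
    [AddCommGroup E] [Module R E] [Module.Injective R E] {r : R} (hr : IsSMulRegular E r) :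
    Function.Bijective (r • · : E → E) := by
  obtain ⟨h, hh⟩ := Module.Injective.out (LinearMap.lsmul R E r) hr LinearMap.id
  exact ⟨hr, fun y => ⟨h y, (map_smul h r y).symm.trans (hh y)⟩⟩

theorem Ideal.Quotient.isSMulRegular_of_notMem {R : Type*} [CommRing R] {p : Ideal R}
    [p.IsPrime] {s : R} (hs : s ∉ p) : IsSMulRegular (R ⧸ p) s :=
  isSMulRegular_iff_right_eq_zero_of_smul.2 fun x hx =>
    (mul_eq_zero.1 hx).resolve_left (by rwa [Ideal.Quotient.eq_zero_iff_mem])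

universe v w in
theorem CategoryTheory.Functor.bijective_smul_obj {R : Type*} [CommRing R]
    (F : ModuleCat.{v} R ⥤ ModuleCat.{w} R) [F.Linear R] {X : ModuleCat.{v} R} {r : R}
    (h : Function.Bijective (r • · : X → X)) : Function.Bijective (r • · : F.obj X → F.obj X) := by
  have hmap : F.map (r • 𝟙 X) = r • 𝟙 (F.obj X) := by rw [F.map_smul, F.map_id]
  let e := (F.mapIso (LinearEquiv.ofBijective (LinearMap.lsmul R X r) h).toModuleIso).toLinearEquiv
  convert e.bijective
  change _ = (F.map (r • 𝟙 X)).hom _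
  rw [hmap]
  rfl

theorem LocalizedModule.subsingleton_of_isSMulRegular {R M : Type*} [CommRing R]
    [AddCommGroup M] [Module R M] {S : Submonoid R} (hS : ∀ s ∈ S, IsSMulRegular M s)
    [Subsingleton (LocalizedModule S M)] : Subsingleton M :=
  (subsingleton_iff_forall_eq 0).2 fun m =>
    let ⟨s, hs, hsm⟩ := LocalizedModule.subsingleton_iff.1 ‹_› m
    (hS s hs).right_eq_zero_of_smul hsm

theorem functor_injective_hull_zero_of_localization_zero_general
    (R : Type u) [CommRing R]
    (F : ModuleCat.{u} R ⥤ ModuleCat.{u} R) [F.Linear R]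
    (p : PrimeSpectrum R)
    (E : Type u) [AddCommGroup E] [Module R E] (hE : Module.Injective R E)
    (ι : (R ⧸ p.asIdeal) →ₗ[R] E) (hι : Function.Injective ι)
    (hess : ∀ N : Submodule R E, N ⊓ LinearMap.range ι = ⊥ → N = ⊥)
    (h : Subsingleton
      (LocalizedModule p.asIdeal.primeCompl (F.obj (ModuleCat.of R E)).carrier)) :
    Subsingleton (F.obj (ModuleCat.of R E)).carrier := by
  have hbij (s : R) (hs : s ∈ p.asIdeal.primeCompl) : Function.Bijective (s • · : E → E) :=
    hE.bijective_smul_of_isSMulRegular <| Submodule.IsEssential.isSMulRegular hess <|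
      (LinearEquiv.isSMulRegular_congr (LinearEquiv.ofInjective ι hι) s).1
        (Ideal.Quotient.isSMulRegular_of_notMem hs)
  exact LocalizedModule.subsingleton_of_isSMulRegular
    fun s hs => (F.bijective_smul_obj (X := ModuleCat.of R E) (hbij s hs)).1

/-- If `F` is an `R`-linear functor on the category of `R`-modules,
`p` is a prime ideal and `E` is an injective hull of `R/p`, then `F(E)ₚ = 0`
implies `F(E) = 0`. -/
theorem functor_injective_hull_zero_of_localization_zero
    (R : Type u) [CommRing R] [IsNoetherianRing R]
    (F : ModuleCat.{u} R ⥤ ModuleCat.{u} R) [F.Additive] [F.Linear R]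
    (p : PrimeSpectrum R)
    (E : Type u) [AddCommGroup E] [Module R E] (hE : Module.Injective R E)
    (ι : (R ⧸ p.asIdeal) →ₗ[R] E) (hι : Function.Injective ι)
    (hess : ∀ N : Submodule R E, N ⊓ LinearMap.range ι = ⊥ → N = ⊥)
    (h : Subsingleton
      (LocalizedModule p.asIdeal.primeCompl (F.obj (ModuleCat.of R E)).carrier)) :
    Subsingleton (F.obj (ModuleCat.of R E)).carrier :=
  functor_injective_hull_zero_of_localization_zero_general R F p E hE ι hι hess h
end

section
/- Let R be a commutative noetherian local ring, M a finitely generated R-module, and s, t > 0 integers. If Ext_R^i(M, R) = 0 for all s ≤ i ≤ s + t, then there is an isomorphism Ext_R^s(M, M) ≅ Ext_R^s(Ω^t M, Ω^t M). -/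
open CategoryTheory

universe u

/-! Induct on `t` along `0 → K → F → M → 0` with `F` finite free. As `Ext^i(M, R)`, hence
`Ext^i(M, F)`, vanishes for `s ≤ i ≤ s + t`, the long exact sequence in the second variable gives
`Ext^s(M, M) ≅ Ext^{s+1}(M, K)`, and since `F` is projective and `s ≥ 1`, dimension shifting in
the first variable gives `Ext^{s+1}(M, K) ≅ Ext^s(K, K)` and `Ext^i(K, R) ≅ Ext^{i+1}(M, R)`,
so `K` satisfies the hypothesis for `t - 1`. -/

open CategoryTheory Limits Opposite

section Abelian

variable {R : Type*} [Ring R] {C : Type*} [Category C] [Abelian C] [Linear R C]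

namespace ChainComplex

variable (R) (K : ChainComplex C ℕ)

def linearYonedaObjMap {Y Y' : C} (f : Y ⟶ Y') :
    K.linearYonedaObj R Y ⟶ K.linearYonedaObj R Y' where
  f i := ((linearYoneda R C).map f).app (op (K.X i))
  comm' i j _ := (((linearYoneda R C).map f).naturality (K.d j i).op).symm

def linearYonedaObjShortComplex (S : ShortComplex C) :
    ShortComplex (CochainComplex (ModuleCat R) ℕ) :=
  ShortComplex.mk (K.linearYonedaObjMap R S.f) (K.linearYonedaObjMap R S.g) (by
    ext i (x : K.X i ⟶ S.X₁)
    change (x ≫ S.f) ≫ S.g = 0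
    simp)

lemma shortExact_linearYonedaObjShortComplex [∀ n, Projective (K.X n)] {S : ShortComplex C}
    (hS : S.ShortExact) : (K.linearYonedaObjShortComplex R S).ShortExact := by
  have := hS.mono_f
  have := hS.epi_g
  refine HomologicalComplex.shortExact_of_degreewise_shortExact _ fun i ↦
    ShortComplex.ShortExact.mk' ?_ ?_ ?_
  · rw [ShortComplex.moduleCat_exact_iff]
    intro (x : K.X i ⟶ S.X₂) hx
    exact ⟨hS.exact.lift x hx, hS.exact.lift_f x hx⟩
  · rw [ModuleCat.mono_iff_injective]
    intro (x : K.X i ⟶ S.X₁) (y : K.X i ⟶ S.X₁) h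
    exact (cancel_mono S.f).1 h
  · rw [ModuleCat.epi_iff_surjective]
    intro (x : K.X i ⟶ S.X₃)
    exact ⟨Projective.factorThru x S.g, Projective.factorThru_comp x S.g⟩

end ChainComplex

namespace CategoryTheory.ProjectiveResolution

section Augment

variable {X Y : C} (Q : ProjectiveResolution X) (f : X ⟶ Y)

noncomputable def augment : ChainComplex C ℕ :=
  Q.complex.augment (Q.π.f 0 ≫ (HomologicalComplex.singleObjXSelf _ 0 X).hom ≫ f)
    (by rw [Q.complex_d_comp_π_f_zero_assoc, zero_comp])

lemma augment_d_comp_eq_zero {Z : C} (g : Y ⟶ Z) (hfg : f ≫ g = 0) :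
    (Q.augment f).d 1 0 ≫ g = 0 := by
  change (Q.π.f 0 ≫ _ ≫ f) ≫ g = 0
  simp only [Category.assoc, hfg, comp_zero]

lemma exactAt_augment_succ [Mono f] (n : ℕ) : (Q.augment f).ExactAt (n + 1) := by
  rcases n with _ | n
  · rw [HomologicalComplex.exactAt_iff' _ 2 1 0 (by simp) (by simp)]
    let φ : ShortComplex.mk _ _ Q.complex_d_comp_π_f_zero ⟶ (Q.augment f).sc' 2 1 0 :=
      { τ₁ := 𝟙 _, τ₂ := 𝟙 _, τ₃ := (HomologicalComplex.singleObjXSelf _ 0 X).hom ≫ f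
        comm₁₂ := (Category.id_comp _).trans (Category.comp_id _).symm
        comm₂₃ := Category.id_comp _ }
    have : Epi φ.τ₁ := inferInstanceAs (Epi (𝟙 _))
    have : IsIso φ.τ₂ := inferInstanceAs (IsIso (𝟙 _))
    have : Mono φ.τ₃ := inferInstanceAs (Mono (_ ≫ f))
    exact (ShortComplex.exact_iff_of_epi_of_isIso_of_mono φ).1 Q.exact₀
  · rw [HomologicalComplex.exactAt_iff' _ (n + 3) (n + 2) (n + 1) (by simp) (by simp)]
    exact Q.exact_succ n

end Augment

section OfShortExact

variable {S : ShortComplex C} (Q : ProjectiveResolution S.X₁)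

noncomputable def augmentπ : Q.augment S.f ⟶ (ChainComplex.single₀ C).obj S.X₃ :=
  (ChainComplex.toSingle₀Equiv _ _).symm ⟨S.g, Q.augment_d_comp_eq_zero S.f S.g S.zero⟩

lemma augmentπ_f_zero :
    Q.augmentπ.f 0 ≫ (HomologicalComplex.singleObjXSelf (ComplexShape.down ℕ) 0 S.X₃).hom = S.g :=
  (congrArg (· ≫ _) (ChainComplex.toSingle₀Equiv_symm_apply_f_zero _ _)).trans (Category.comp_id _)

lemma quasiIsoAt_augmentπ_zero (hS : S.ShortExact) : QuasiIsoAt Q.augmentπ 0 := by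
  have := hS.mono_f
  rw [ChainComplex.quasiIsoAt₀_iff, ShortComplex.quasiIso_iff_of_zeros' _ rfl rfl rfl]
  refine ⟨?_, (epi_comp_iff_of_isIso _
    (HomologicalComplex.singleObjXSelf (ComplexShape.down ℕ) 0 S.X₃).hom).1
      (Q.augmentπ_f_zero ▸ hS.epi_g)⟩
  let φ : ShortComplex.mk ((Q.augment S.f).d 1 0) (Q.augmentπ.f 0)
      (by rw [← Q.augmentπ.comm 1 0, HomologicalComplex.single_obj_d, comp_zero]) ⟶ S :=
    { τ₁ := Q.π.f 0 ≫ (HomologicalComplex.singleObjXSelf _ 0 S.X₁).hom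
      τ₂ := 𝟙 _
      τ₃ := (HomologicalComplex.singleObjXSelf (ComplexShape.down ℕ) 0 S.X₃).hom
      comm₁₂ := (Category.assoc _ _ _).trans (Category.comp_id _).symm
      comm₂₃ := (Category.id_comp _).trans Q.augmentπ_f_zero.symm }
  have : Epi φ.τ₁ := inferInstanceAs (Epi (Q.π.f 0 ≫ _))
  have : IsIso φ.τ₂ := inferInstanceAs (IsIso (𝟙 _))
  have : Mono φ.τ₃ := inferInstanceAs
    (Mono (HomologicalComplex.singleObjXSelf (ComplexShape.down ℕ) 0 S.X₃).hom)
  exact (ShortComplex.exact_iff_of_epi_of_isIso_of_mono φ).2 hS.exact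

noncomputable def ofShortExact (hS : S.ShortExact) [Projective S.X₂] :
    ProjectiveResolution S.X₃ where
  complex := Q.augment S.f
  projective
    | 0 => inferInstanceAs (Projective S.X₂)
    | n + 1 => inferInstanceAs (Projective (Q.complex.X n))
  π := Q.augmentπ
  quasiIso := ⟨fun
    | 0 => Q.quasiIsoAt_augmentπ_zero hS
    | n + 1 => by
      have := hS.mono_f
      rw [quasiIsoAt_iff_exactAt' _ _ (ChainComplex.exactAt_succ_single_obj _ _)]
      exact Q.exactAt_augment_succ S.f n⟩

end OfShortExact

end CategoryTheory.ProjectiveResolution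

variable [EnoughProjectives C]

variable (R) in
noncomputable abbrev extObj (n : ℕ) (X Y : C) : ModuleCat R :=
  ((Ext R C n).obj (op X)).obj Y

noncomputable def extObjMapIso (n : ℕ) {X X' Y Y' : C} (e : X ≅ X') (e' : Y ≅ Y') :
    extObj R n X Y ≅ extObj R n X' Y' :=
  ((Ext R C n).mapIso e.symm.op).app Y ≪≫ ((Ext R C n).obj (op X')).mapIso e'

lemma isZero_extObj_of_isZero (X : C) {Y : C} (hY : IsZero Y) (n : ℕ) :
    IsZero (extObj R n X Y) := by
  let P := ProjectiveResolution.of X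
  refine IsZero.of_iso ?_ (P.isoExt n Y)
  rw [← HomologicalComplex.exactAt_iff_isZero_homology]
  refine ShortComplex.exact_of_isZero_X₂ _ ?_
  rw [ModuleCat.isZero_iff_subsingleton]
  exact ⟨fun (f g : P.complex.X n ⟶ Y) ↦ hY.eq_of_tgt f g⟩

section ShortExact

variable {S : ShortComplex C}

lemma isZero_extObj_X₂_of_shortExact (hS : S.ShortExact) (X : C) (n : ℕ)
    (h₁ : IsZero (extObj R n X S.X₁)) (h₃ : IsZero (extObj R n X S.X₃)) :
    IsZero (extObj R n X S.X₂) :=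
  let P := ProjectiveResolution.of X
  ((P.complex.shortExact_linearYonedaObjShortComplex R hS).homology_exact₂ n).isZero_X₂
    ((h₁.of_iso (P.isoExt n S.X₁).symm).eq_of_src _ _)
    ((h₃.of_iso (P.isoExt n S.X₃).symm).eq_of_tgt _ _) |>.of_iso (P.isoExt n S.X₂)

noncomputable def extObjδIso (hS : S.ShortExact) (X : C) (n : ℕ)
    (h₀ : IsZero (extObj R n X S.X₂)) (h₁ : IsZero (extObj R (n + 1) X S.X₂)) :
    extObj R n X S.X₃ ≅ extObj R (n + 1) X S.X₁ :=
  let P := ProjectiveResolution.of X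
  P.isoExt n S.X₃ ≪≫
    (P.complex.shortExact_linearYonedaObjShortComplex R hS).δIso n (n + 1) rfl
      (h₀.of_iso (P.isoExt n S.X₂).symm) (h₁.of_iso (P.isoExt (n + 1) S.X₂).symm) ≪≫
    (P.isoExt (n + 1) S.X₁).symm

/-- Degrees `n + 1, n + 2, n + 3` of the spliced resolution `Q.ofShortExact hS` are degrees
`n, n + 1, n + 2` of `Q`, so both homologies are computed by the same short complex. -/
noncomputable def extObjShiftIso (hS : S.ShortExact) [Projective S.X₂] (Y : C) (n : ℕ) :
    extObj R (n + 2) S.X₃ Y ≅ extObj R (n + 1) S.X₁ Y :=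
  let Q := ProjectiveResolution.of S.X₁
  (Q.ofShortExact hS).isoExt (n + 2) Y ≪≫
    ((Q.ofShortExact hS).complex.linearYonedaObj R Y).homologyIsoSc' (n + 1) (n + 2) (n + 3)
      (by simp) (by simp) ≪≫
    ((Q.complex.linearYonedaObj R Y).homologyIsoSc' n (n + 1) (n + 2)
      (by simp) (by simp)).symm ≪≫
    (Q.isoExt (n + 1) Y).symm

noncomputable def extObjSelfIsoOfShortExact (hS : S.ShortExact) [Projective S.X₂] (n : ℕ)
    (h₀ : IsZero (extObj R (n + 1) S.X₃ S.X₂)) (h₁ : IsZero (extObj R (n + 2) S.X₃ S.X₂)) :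
    extObj R (n + 1) S.X₃ S.X₃ ≅ extObj R (n + 1) S.X₁ S.X₁ :=
  extObjδIso hS S.X₃ (n + 1) h₀ h₁ ≪≫ extObjShiftIso hS S.X₁ n

lemma isZero_extObj_X₁_of_shortExact (hS : S.ShortExact) [Projective S.X₂] (Y : C) {i : ℕ}
    (hi : 1 ≤ i) (h : IsZero (extObj R (i + 1) S.X₃ Y)) : IsZero (extObj R i S.X₁ Y) := by
  obtain ⟨n, rfl⟩ : ∃ n, i = n + 1 := ⟨i - 1, by omega⟩
  exact h.of_iso (extObjShiftIso hS Y n).symm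

end ShortExact

lemma isZero_extObj_biprod (X : C) {Y₁ Y₂ : C} (n : ℕ) (h₁ : IsZero (extObj R n X Y₁))
    (h₂ : IsZero (extObj R n X Y₂)) : IsZero (extObj R n X (Y₁ ⊞ Y₂)) :=
  isZero_extObj_X₂_of_shortExact
    (ShortComplex.Splitting.ofHasBinaryBiproduct Y₁ Y₂).shortExact X n h₁ h₂

end Abelian

section ModuleCat

variable {R : Type u} [CommRing R]

lemma isZero_extObj_finFree {X : ModuleCat.{u} R} {n : ℕ} (h : IsZero (extObj R n X (.of R R)))
    (k : ℕ) : IsZero (extObj R n X (.of R (Fin k → R))) := by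
  induction k with
  | zero => exact isZero_extObj_of_isZero X (ModuleCat.isZero_of_subsingleton _) n
  | succ k ih =>
    let e : .of R R ⊞ .of R (Fin k → R) ≅ ModuleCat.of R (Fin (k + 1) → R) :=
      ModuleCat.biprodIsoProd _ _ ≪≫ (Fin.consLinearEquiv R fun _ ↦ R).toModuleIso
    exact (isZero_extObj_biprod X n h ih).of_iso (((Ext R _ n).obj (op X)).mapIso e).symm

end ModuleCat

theorem ext_self_iso_ext_syzygy_self_general
    (R : Type u) [CommRing R]
    (M : Type u) [AddCommGroup M] [Module R M]
    (s t : ℕ) (hs : 0 < s)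
    (hext : ∀ i : ℕ, s ≤ i → i ≤ s + t → Subsingleton (extGroup R i M R)) :
    ∀ (N : Type u) [AddCommGroup N] [Module R N], IsSyzygy R N t M →
      Nonempty (extGroup R s M M ≃ₗ[R] extGroup R s N N) := by
  obtain ⟨n, rfl⟩ : ∃ n, s = n + 1 := ⟨s - 1, by omega⟩
  replace hext i (h₁ : n + 1 ≤ i) (h₂ : i ≤ n + 1 + t) :
      IsZero (extObj R i (ModuleCat.of R M) (ModuleCat.of R R)) :=
    ModuleCat.isZero_iff_subsingleton.2 (hext i h₁ h₂)
  induction t generalizing M with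
  | zero =>
    rintro N _ _ ⟨e⟩
    exact ⟨(extObjMapIso (n + 1) e.toModuleIso.symm e.toModuleIso.symm).toLinearEquiv⟩
  | succ t ih =>
    rintro N _ _ ⟨k, f, hf, hN⟩
    have hS := LinearMap.shortExact_shortComplexKer hf
    have : Projective (ModuleCat.of R (Fin k → R)) :=
      (IsProjective.iff_projective _).1 inferInstance
    have hF i (h₁ : n + 1 ≤ i) (h₂ : i ≤ n + 1 + (t + 1)) :=
      isZero_extObj_finFree (hext i h₁ h₂) k
    obtain ⟨e⟩ := ih (LinearMap.ker f) (fun i h₁ h₂ ↦ isZero_extObj_X₁_of_shortExact hS _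
      (by omega) (hext (i + 1) (by omega) (by omega))) N hN
    exact ⟨(extObjSelfIsoOfShortExact hS n (hF _ le_rfl (by omega))
      (hF _ (by omega) (by omega))).toLinearEquiv.trans e⟩

/-- Over a noetherian local ring `R`, if `Ext^i(M, R) = 0` for all
`s ≤ i ≤ s + t` (with `s, t > 0`), then `Ext^s(M, M) ≅ Ext^s(Ωᵗ M, Ωᵗ M)`. -/
theorem ext_self_iso_ext_syzygy_self
    (R : Type u) [CommRing R] [IsNoetherianRing R] [IsLocalRing R]
    (M : Type u) [AddCommGroup M] [Module R M] [Module.Finite R M]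
    (s t : ℕ) (hs : 0 < s) (ht : 0 < t)
    (hext : ∀ i : ℕ, s ≤ i → i ≤ s + t → Subsingleton (extGroup R i M R)) :
    ∀ (N : Type u) [AddCommGroup N] [Module R N], IsSyzygy R N t M →
      Nonempty (extGroup R s M M ≃ₗ[R] extGroup R s N N) :=
  ext_self_iso_ext_syzygy_self_general R M s t hs hext
end
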